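/- For any nonempty index k = (k_1,…,k_r) of positive integers and any positive integer N, the multiple sum of Hoffman's type H_{<N}(k) = ∑_{1≤m_1≤⋯≤m_r<N} ((-1)^{m_r-1}/(m_1^{k_1}⋯m_r^{k_r}))·binom(N-1,m_r) equals H^♭_{<N}(k) = ∑ (1/(n_{r1}⋯n_{r k_r})) ∏_{i=1}^{r-1} 1/((N-n_{i1}) n_{i2}⋯n_{i k_i}), where the latter sum runs over n_{ij} ∈ [1,N-1] with n_{i1} ≤ ⋯ ≤ n_{i k_i} for each i and n_{(i-1)1} ≤ n_{i k_i} for 2 ≤ i ≤ r. -/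

import Mathlib

/-- Auxiliary recursion: `zetaStarAux M t` sums over `0 < m₁ ≤ ⋯ ≤ m_r < M` where the
exponent list `t` lists the exponents from the *largest* variable downwards. -/
def zetaStarAux : ℕ → List ℕ → ℚ
  | _, [] => 1
  | M, k :: t => ∑ m ∈ Finset.Ioo 0 M, (1 / (m : ℚ) ^ k) * zetaStarAux (m + 1) t

/-- The multiple star harmonic sum `ζ⋆_{<N}(k₁,…,k_r) = ∑_{0<m₁≤⋯≤m_r<N} ∏ᵢ 1/mᵢ^{kᵢ}`. -/
def zetaStar (N : ℕ) (ks : List ℕ) : ℚ := zetaStarAux N ks.reverse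

/-- The multiple sum of Hoffman's type
`H_{<N}(k₁,…,k_r) = ∑_{1≤m₁≤⋯≤m_r<N} ((-1)^{m_r-1}/(m₁^{k₁}⋯m_r^{k_r}))·binom(N-1,m_r)`. -/
def hoffmanSum (N : ℕ) (ks : List ℕ) : ℚ :=
  match ks.reverse with
  | [] => 1
  | k :: t => ∑ m ∈ Finset.Ioo 0 N,
      ((-1 : ℚ) ^ (m - 1) * ((N - 1).choose m : ℚ) / (m : ℚ) ^ k) * zetaStarAux (m + 1) t

/-- Auxiliary recursion for the ♭-sum of Hoffman's type: identical to the recursion for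
the ⋆♭-sum except that the bottom variable of the *last* block carries the factor `1/n`
instead of `1/(N-n)`.  `hAux N lo hi j t`: the current variable ranges over `[lo, hi]`,
`j` variables remain in the current block, and `t` lists the remaining blocks. -/
def hAux (N : ℕ) : ℕ → ℕ → ℕ → List ℕ → ℚ
  | _, _, 0, [] => 1
  | lo, _, 0, k :: t => hAux N lo (N - 1) k t
  | lo, hi, 1, [] => ∑ n ∈ Finset.Icc lo hi, (1 / (n : ℚ))
  | lo, hi, 1, k :: t => ∑ n ∈ Finset.Icc lo hi, (1 / ((N : ℚ) - (n : ℚ))) * hAux N n 0 0 (k :: t)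
  | lo, hi, (j+2), t => ∑ n ∈ Finset.Icc lo hi, (1 / (n : ℚ)) * hAux N 1 n (j+1) t
  termination_by _ _ j t => (t.length, j)

/-- The ♭-sum `H♭_{<N}(k₁,…,k_r)`: the sum of
`(1/(n_{r1}⋯n_{r k_r}))·∏_{i=1}^{r-1} 1/((N-n_{i1})·n_{i2}⋯n_{i k_i})` over
`n_{ij} ∈ [1,N-1]` with `n_{i1} ≤ ⋯ ≤ n_{i k_i}` for each `i` and
`n_{(i-1)1} ≤ n_{i k_i}` for `2 ≤ i ≤ r`. -/
def hoffmanFlat (N : ℕ) (ks : List ℕ) : ℚ := hAux N 1 (N - 1) 0 ks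

/-!
Put `M = N - 1` and `K_c(μ) = C(c, μ) / C(M, μ)`, so that `K_M = 1`. The ♭-sum is read block by
block, starting from the top variable of the first block. The key claim is that the ♭-sum of an
index whose first variable is restricted to `≤ c` equals
`∑_μ K_c(μ) w(μ) S(μ)`: the first block collapses to one variable `μ` of weight `w(μ) = 1/μ^k`,
and `S(μ)` is the same collapse of the remaining blocks, summed over `μ ≤ μ₂ ≤ ⋯ ≤ μ_r ≤ M`; the
last block carries the extra factor `(-1)^(μ-1) C(M, μ)`. At `c = M` this is `H_{<N}(k)`.

The induction absorbs each kind of variable by an identity of the kernel: an inner variable `1/n`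
by the hockey stick `∑_{n ≤ c} C(n, μ)/n = C(c, μ)/μ`; the bottom variable `1/(N - n)` of a block
by `∑_{n ≤ c} (1 - K_{n-1}(p))/(N - n) = ∑_{μ ≤ p} K_c(μ)/μ`, which telescopes in `p`; and the
empty tail of the last block by `∑_μ (-1)^(μ-1) C(n, μ) = 1`.
-/

open Finset

section Kernel

variable {K : Type*} [Field K] [CharZero K]

theorem sum_Icc_choose_pred (c p : ℕ) : ∑ n ∈ Icc 1 c, (n - 1).choose p = c.choose (p + 1) := by
  induction c with
  | zero => simp
  | succ c ih =>
    rw [sum_Icc_succ_top (by omega), ih, Nat.add_sub_cancel, Nat.choose_succ_succ', add_comm]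

theorem cast_choose_succ_right_eq (x p : ℕ) :
    (x.choose (p + 1) : K) * (p + 1) = x.choose p * ((x : K) - p) := by
  rcases le_or_gt p x with h | h
  · rw [← Nat.cast_sub h]
    exact_mod_cast Nat.choose_succ_right_eq x p
  · simp [Nat.choose_eq_zero_of_lt h, Nat.choose_eq_zero_of_lt (by omega : x < p + 1)]

theorem sum_Icc_choose_div {μ : ℕ} (hμ : 1 ≤ μ) (c : ℕ) :
    ∑ n ∈ Icc 1 c, (n.choose μ : K) / n = c.choose μ / μ := by
  obtain ⟨ν, rfl⟩ := Nat.exists_eq_add_one_of_ne_zero (Nat.one_le_iff_ne_zero.1 hμ)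
  calc ∑ n ∈ Icc 1 c, (n.choose (ν + 1) : K) / n
      = ∑ n ∈ Icc 1 c, ((n - 1).choose ν : K) / (ν + 1) := by
        refine sum_congr rfl fun n hn => ?_
        obtain ⟨m, rfl⟩ := Nat.exists_eq_add_one_of_ne_zero (by grind : n ≠ 0)
        have h := Nat.add_one_mul_choose_eq m ν
        rw [div_eq_div_iff (Nat.cast_ne_zero.2 m.succ_ne_zero) (Nat.cast_add_one_ne_zero ν),
          Nat.add_sub_cancel]
        exact_mod_cast h.symm.trans (mul_comm _ _)
    _ = c.choose (ν + 1) / (ν + 1 : ℕ) := by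
        rw [← sum_div, ← Nat.cast_sum, sum_Icc_choose_pred]
        push_cast
        ring

def binomKernel (M c μ : ℕ) : K := c.choose μ / M.choose μ

def kernelSum (M c : ℕ) (f : ℕ → K) : K := ∑ μ ∈ Icc 1 M, binomKernel M c μ * f μ

variable {M : ℕ}

theorem binomKernel_self {μ : ℕ} (hμ : μ ≤ M) : binomKernel M M μ = (1 : K) :=
  div_self (by exact_mod_cast (Nat.choose_pos hμ).ne')

theorem kernelSum_self (f : ℕ → K) : kernelSum M M f = ∑ μ ∈ Icc 1 M, f μ :=
  sum_congr rfl fun μ hμ => by rw [binomKernel_self (mem_Icc.1 hμ).2, one_mul]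

theorem binomKernel_sub_binomKernel_succ {p : ℕ} (hp : p < M) (x : ℕ) :
    binomKernel M x p - binomKernel M x (p + 1)
      = ((M : K) - x) * x.choose p / ((p + 1) * M.choose (p + 1)) := by
  have hx := cast_choose_succ_right_eq (K := K) x p
  have hM := cast_choose_succ_right_eq (K := K) M p
  have hMp : (M.choose p : K) ≠ 0 := by exact_mod_cast (Nat.choose_pos hp.le).ne'
  have hMp1 : (M.choose (p + 1) : K) ≠ 0 := by exact_mod_cast (Nat.choose_pos hp).ne'
  unfold binomKernel
  field_simp
  linear_combination (x.choose p : K) * hM - (M.choose p : K) * hx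

theorem sum_one_sub_binomKernel_div {p c : ℕ} (hp : p ≤ M) (hc : c ≤ M) :
    ∑ n ∈ Icc 1 c, (1 - binomKernel M (n - 1) p) / ((M : K) + 1 - n)
      = ∑ μ ∈ Icc 1 p, (binomKernel M c μ : K) / μ := by
  induction p with
  | zero => simp [binomKernel]
  | succ p ih =>
    have hstep : ∀ n ∈ Icc 1 c, (1 - binomKernel M (n - 1) (p + 1)) / ((M : K) + 1 - n)
        = (1 - binomKernel M (n - 1) p) / ((M : K) + 1 - n)
          + ((n - 1).choose p : K) / ((p + 1) * M.choose (p + 1)) := by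
      intro n hn
      obtain ⟨hn1, hnc⟩ := mem_Icc.1 hn
      have hgap : (M : K) + 1 - n ≠ 0 := by
        rw [← Nat.cast_add_one, ← Nat.cast_sub (by omega)]
        exact_mod_cast (by omega : M + 1 - n ≠ 0)
      have hdiff := binomKernel_sub_binomKernel_succ (K := K) (by omega : p < M) (n - 1)
      rw [Nat.cast_sub hn1, Nat.cast_one, sub_sub_eq_add_sub] at hdiff
      rw [← sub_add_sub_cancel (1 : K) (binomKernel M (n - 1) p), hdiff, add_div, mul_div_assoc,
        mul_div_cancel_left₀ _ hgap]
    rw [sum_congr rfl hstep, sum_add_distrib, ih (by omega), ← sum_div, ← Nat.cast_sum,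
      sum_Icc_choose_pred, sum_Icc_succ_top (by omega), binomKernel, div_div, mul_comm,
      Nat.cast_add_one]

theorem sum_inv_mul_eq_kernelSum {c : ℕ} {f g : ℕ → K}
    (hg : ∀ n ∈ Icc 1 c, g n = kernelSum M n f) :
    ∑ n ∈ Icc 1 c, 1 / (n : K) * g n = kernelSum M c (fun μ => 1 / μ * f μ) := by
  calc ∑ n ∈ Icc 1 c, 1 / (n : K) * g n
      = ∑ μ ∈ Icc 1 M, (∑ n ∈ Icc 1 c, (n.choose μ : K) / n) * (f μ / M.choose μ) := by
        simp_rw [sum_mul]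
        rw [sum_congr rfl fun n hn => by rw [hg n hn, kernelSum, mul_sum], sum_comm]
        refine sum_congr rfl fun μ _ => sum_congr rfl fun n _ => ?_
        rw [binomKernel]
        ring
    _ = kernelSum M c (fun μ => 1 / μ * f μ) := by
        refine sum_congr rfl fun μ hμ => ?_
        rw [sum_Icc_choose_div (mem_Icc.1 hμ).1, binomKernel]
        ring

theorem kernelSum_alternating_choose {n : ℕ} (hn : 1 ≤ n) (hnM : n ≤ M) :
    kernelSum M n (fun μ => (-1 : K) ^ (μ - 1) * M.choose μ) = 1 := by
  have hvanish : ∑ μ ∈ range (M + 1), (-1 : K) ^ μ * n.choose μ = 0 := by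
    rw [← sum_subset (range_subset_range.2 (by omega : n + 1 ≤ M + 1)) fun μ _ hμ => by
      rw [Nat.choose_eq_zero_of_lt (by simpa using hμ)]; simp]
    exact_mod_cast Int.alternating_sum_range_choose_of_ne (by omega : n ≠ 0)
  rw [range_eq_Ico, sum_eq_sum_Ico_succ_bot (by omega), Ico_add_one_right_eq_Icc] at hvanish
  calc kernelSum M n (fun μ => (-1 : K) ^ (μ - 1) * M.choose μ)
      = -∑ μ ∈ Icc 1 M, (-1 : K) ^ μ * n.choose μ := by
        rw [kernelSum, ← sum_neg_distrib]
        refine sum_congr rfl fun μ hμ => ?_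
        obtain ⟨hμ1, hμM⟩ := mem_Icc.1 hμ
        obtain ⟨ν, rfl⟩ := Nat.exists_eq_add_one_of_ne_zero (by omega : μ ≠ 0)
        have : (M.choose (ν + 1) : K) ≠ 0 := by exact_mod_cast (Nat.choose_pos hμM).ne'
        rw [binomKernel, Nat.add_sub_cancel, pow_succ]
        field_simp
    _ = 1 := by
        simp only [pow_zero, Nat.choose_zero_right, Nat.cast_one, mul_one, zero_add] at hvanish
        linear_combination -hvanish

theorem sum_inv_mul_kernelSum_sub {c : ℕ} (hc : c ≤ M) (f : ℕ → K) :
    ∑ n ∈ Icc 1 c, 1 / ((M : K) + 1 - n) * (kernelSum M M f - kernelSum M (n - 1) f)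
      = kernelSum M c (fun μ => 1 / μ * ∑ μ' ∈ Icc μ M, f μ') := by
  calc ∑ n ∈ Icc 1 c, 1 / ((M : K) + 1 - n) * (kernelSum M M f - kernelSum M (n - 1) f)
      = ∑ μ' ∈ Icc 1 M, (∑ n ∈ Icc 1 c, (1 - binomKernel M (n - 1) μ') / ((M : K) + 1 - n))
          * f μ' := by
        simp_rw [sum_mul]
        rw [sum_comm]
        refine sum_congr rfl fun n _ => ?_
        rw [kernelSum_self, kernelSum, ← sum_sub_distrib, mul_sum]
        exact sum_congr rfl fun μ' _ => by ring
    _ = ∑ μ' ∈ Icc 1 M, ∑ μ ∈ Icc 1 μ', binomKernel M c μ / (μ : K) * f μ' := by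
        refine sum_congr rfl fun μ' hμ' => ?_
        rw [sum_one_sub_binomKernel_div (mem_Icc.1 hμ').2 hc, sum_mul]
    _ = ∑ μ ∈ Icc 1 M, ∑ μ' ∈ Icc μ M, binomKernel M c μ / (μ : K) * f μ' :=
        sum_comm' fun μ' μ => by simp only [mem_Icc]; omega
    _ = kernelSum M c (fun μ => 1 / μ * ∑ μ' ∈ Icc μ M, f μ') := by
        refine sum_congr rfl fun μ _ => ?_
        simp only [mul_sum]
        exact sum_congr rfl fun μ' _ => by ring

end Kernel

theorem Icc_one_eq_Ioc_zero (n : ℕ) : Icc 1 n = Ioc 0 n := Icc_add_one_left_eq_Ioc 0 n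

section Chain

variable {R : Type*} [CommSemiring R]

def chainSum : List (ℕ → R) → ℕ → ℕ → R
  | [], _, _ => 1
  | w :: ws, lo, hi => ∑ n ∈ Icc lo hi, w n * chainSum ws n hi

theorem chainSum_append_singleton (ws : List (ℕ → R)) (w : ℕ → R) (lo hi : ℕ) :
    chainSum (ws ++ [w]) lo hi = ∑ n ∈ Icc lo hi, w n * chainSum ws lo n := by
  induction ws generalizing lo with
  | nil => simp [chainSum]
  | cons v ws ih =>
    simp only [List.cons_append, chainSum, ih, mul_sum]
    rw [sum_comm' (t' := Icc lo hi) (s' := fun n => Icc lo n) fun a n => by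
      simp only [mem_Icc]; omega]
    exact sum_congr rfl fun n _ => sum_congr rfl fun a _ => mul_left_comm _ _ _

end Chain

-- `t` lists the blocks after this one, so `t = []` marks the last block.
def blockWeight (M k : ℕ) (t : List ℕ) (μ : ℕ) : ℚ :=
  (if t = [] then (-1 : ℚ) ^ (μ - 1) * M.choose μ else 1) / μ ^ k

def harmonicWeights (M : ℕ) : List ℕ → List (ℕ → ℚ)
  | [] => []
  | k :: t => blockWeight M k t :: harmonicWeights M t

def harmonicSummand (M k : ℕ) (t : List ℕ) (μ : ℕ) : ℚ :=
  blockWeight M k t μ * chainSum (harmonicWeights M t) μ M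

theorem harmonicSummand_succ (M k : ℕ) (t : List ℕ) :
    harmonicSummand M (k + 1) t = fun μ => 1 / μ * harmonicSummand M k t μ := by
  funext μ
  simp only [harmonicSummand, blockWeight, pow_succ]
  ring

theorem harmonicWeights_append_singleton (M : ℕ) (u : List ℕ) (k : ℕ) :
    harmonicWeights M (u ++ [k])
      = u.map (fun a (μ : ℕ) => 1 / (μ : ℚ) ^ a) ++ [blockWeight M k []] := by
  induction u with
  | nil => rfl
  | cons a u ih =>
    rw [List.cons_append, harmonicWeights, ih, List.map_cons, List.cons_append]
    congr
    funext μ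
    simp [blockWeight]

theorem zetaStarAux_succ (t : List ℕ) (m : ℕ) :
    zetaStarAux (m + 1) t = chainSum (t.reverse.map fun a (μ : ℕ) => 1 / (μ : ℚ) ^ a) 1 m := by
  induction t generalizing m with
  | nil => rfl
  | cons k t ih =>
    rw [zetaStarAux, List.reverse_cons, List.map_append, List.map_singleton,
      chainSum_append_singleton, Ioo_add_one_right_eq_Ioc, Icc_one_eq_Ioc_zero]
    exact sum_congr rfl fun n _ => by rw [ih]

theorem hoffmanSum_eq_chainSum (M : ℕ) {ks : List ℕ} (hks : ks ≠ []) :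
    hoffmanSum (M + 1) ks = chainSum (harmonicWeights M ks) 1 M := by
  obtain ⟨u, k, rfl⟩ := (List.eq_nil_or_concat' ks).resolve_left hks
  rw [harmonicWeights_append_singleton, chainSum_append_singleton]
  simp only [hoffmanSum, List.reverse_append, List.reverse_singleton, List.singleton_append,
    Nat.add_sub_cancel, Ioo_add_one_right_eq_Ioc, ← Icc_one_eq_Ioc_zero, zetaStarAux_succ,
    List.reverse_reverse]
  rfl

theorem hAux_succ_nil (N lo hi j : ℕ) :
    hAux N lo hi (j + 1) [] = ∑ n ∈ Icc lo hi, 1 / (n : ℚ) * hAux N 1 n j [] := by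
  rcases j with _ | j <;> simp [hAux]

theorem hAux_add_two (N lo hi j : ℕ) (t : List ℕ) :
    hAux N lo hi (j + 2) t = ∑ n ∈ Icc lo hi, 1 / (n : ℚ) * hAux N 1 n (j + 1) t := by
  rw [hAux]

theorem hAux_one_cons (N lo hi k : ℕ) (t : List ℕ) :
    hAux N lo hi 1 (k :: t) = ∑ n ∈ Icc lo hi, 1 / ((N : ℚ) - n) * hAux N n (N - 1) k t := by
  simp [hAux]

theorem hAux_add_hAux (N j : ℕ) (t : List ℕ) {lo hi : ℕ} (hlo : 1 ≤ lo) (hhi : lo ≤ hi + 1) :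
    hAux N 1 (lo - 1) (j + 1) t + hAux N lo hi (j + 1) t = hAux N 1 hi (j + 1) t := by
  obtain ⟨f, hf⟩ : ∃ f : ℕ → ℚ, ∀ a b, hAux N a b (j + 1) t = ∑ n ∈ Icc a b, f n := by
    rcases j with _ | j
    · rcases t with _ | ⟨k, t⟩
      · exact ⟨_, fun a b => by rw [hAux]⟩
      · exact ⟨_, fun a b => hAux_one_cons N a b k t⟩
    · exact ⟨_, fun a b => hAux_add_two N a b j t⟩
  obtain ⟨l, rfl⟩ := Nat.exists_eq_add_one_of_ne_zero (by omega : lo ≠ 0)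
  rw [hf, hf, hf, Nat.add_sub_cancel, Icc_add_one_left_eq_Ioc, Icc_one_eq_Ioc_zero,
    Icc_one_eq_Ioc_zero, sum_Ioc_consecutive _ l.zero_le (by omega)]

theorem hAux_nil_eq_kernelSum (M j : ℕ) {c : ℕ} (hc : c ≤ M) :
    hAux (M + 1) 1 c (j + 1) [] = kernelSum M c (harmonicSummand M (j + 1) []) := by
  have h : ∀ j, ∀ n ∈ Icc 1 M, hAux (M + 1) 1 n j [] = kernelSum M n (harmonicSummand M j []) := by
    intro j
    induction j with
    | zero =>
      intro n hn
      rw [hAux, ← kernelSum_alternating_choose (mem_Icc.1 hn).1 (mem_Icc.1 hn).2]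
      congr 1
      funext μ
      simp [harmonicSummand, blockWeight, harmonicWeights, chainSum]
    | succ j ih =>
      intro n hn
      rw [hAux_succ_nil, harmonicSummand_succ]
      exact sum_inv_mul_eq_kernelSum fun m hm => ih m (by grind)
  rw [hAux_succ_nil, harmonicSummand_succ]
  exact sum_inv_mul_eq_kernelSum fun n hn => h j n (by grind)

theorem hAux_one_cons_eq_kernelSum (M k : ℕ) (t : List ℕ)
    (ih : ∀ c ≤ M, hAux (M + 1) 1 c (k + 1) t = kernelSum M c (harmonicSummand M (k + 1) t))
    {c : ℕ} (hc : c ≤ M) :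
    hAux (M + 1) 1 c 1 ((k + 1) :: t) = kernelSum M c (harmonicSummand M 1 ((k + 1) :: t)) := by
  calc hAux (M + 1) 1 c 1 ((k + 1) :: t)
      = ∑ n ∈ Icc 1 c, 1 / ((M : ℚ) + 1 - n)
          * (hAux (M + 1) 1 M (k + 1) t - hAux (M + 1) 1 (n - 1) (k + 1) t) := by
        rw [hAux_one_cons]
        refine sum_congr rfl fun n hn => ?_
        rw [← hAux_add_hAux (M + 1) k t (mem_Icc.1 hn).1 (by grind), Nat.add_sub_cancel]
        push_cast
        ring
    _ = ∑ n ∈ Icc 1 c, 1 / ((M : ℚ) + 1 - n) * (kernelSum M M (harmonicSummand M (k + 1) t)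
          - kernelSum M (n - 1) (harmonicSummand M (k + 1) t)) := by
        refine sum_congr rfl fun n hn => ?_
        rw [ih M le_rfl, ih (n - 1) (by grind)]
    _ = kernelSum M c (harmonicSummand M 1 ((k + 1) :: t)) := by
        rw [sum_inv_mul_kernelSum_sub hc]
        congr
        funext μ
        simp [harmonicSummand, blockWeight, harmonicWeights, chainSum]

theorem hAux_eq_kernelSum (M : ℕ) (t : List ℕ) (ht : ∀ a ∈ t, 0 < a) (j : ℕ) {c : ℕ}
    (hc : c ≤ M) : hAux (M + 1) 1 c (j + 1) t = kernelSum M c (harmonicSummand M (j + 1) t) := by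
  induction t generalizing j c with
  | nil => exact hAux_nil_eq_kernelSum M j hc
  | cons k t ih =>
    obtain ⟨k, rfl⟩ := Nat.exists_eq_add_one_of_ne_zero (ht k List.mem_cons_self).ne'
    induction j generalizing c with
    | zero =>
      exact hAux_one_cons_eq_kernelSum M k t
        (fun c' hc' => ih (fun a ha => ht a (List.mem_cons_of_mem _ ha)) k hc') hc
    | succ j ihj =>
      rw [hAux_add_two, harmonicSummand_succ]
      exact sum_inv_mul_eq_kernelSum fun n hn => ihj (by grind)

/-- Proposition 4.2: `H_{<N}(k) = H♭_{<N}(k)` for every nonempty index `k` and `N > 0`. -/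
theorem MSW_Hoffman (N : ℕ) (hN : 0 < N) (ks : List ℕ) (hne : ks ≠ [])
    (hks : ∀ a ∈ ks, 0 < a) :
    hoffmanSum N ks = hoffmanFlat N ks := by
  obtain ⟨M, rfl⟩ := Nat.exists_eq_add_one_of_ne_zero hN.ne'
  obtain ⟨k, t, rfl⟩ := List.exists_cons_of_ne_nil hne
  obtain ⟨j, rfl⟩ := Nat.exists_eq_add_one_of_ne_zero (hks k List.mem_cons_self).ne'
  rw [hoffmanSum_eq_chainSum M hne, hoffmanFlat, hAux, Nat.add_sub_cancel,
    hAux_eq_kernelSum M t (fun a ha => hks a (List.mem_cons_of_mem _ ha)) j le_rfl, kernelSum_self]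
  rfl
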